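/- Let n = 2, let d_1, d_2 be unit vectors in ℂ^m, and let ψ be a unit vector in ℂ² (a pure input state of the particle, without quantum memory). Set ρ_A = ψψ^* and q_i = |ψ_i|². Then equality holds in the wave-particle duality: (P_s(q) − 1/2)² + V(ρ̃_A)² = 1/4. -/

import Mathlib

open Matrix ComplexOrder

noncomputable section

/-- Inner product ⟨a, b⟩ = ∑ i, conj (a i) * b i on a finite-dimensional complex space. -/
def ip {k : Type*} [Fintype k] (a b : k → ℂ) : ℂ := ∑ i, star (a i) * b i

/-- The optimal success probability of minimum-error discrimination of the detector
states `d i` with prior probabilities `q i`: the supremum over all POVMs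
`Pov` (positive semidefinite matrices summing to the identity) of
`∑ i, q i * ⟨d i, Pov i (d i)⟩`. -/
def Ps {m n : ℕ} (d : Fin n → Fin m → ℂ) (q : Fin n → ℝ) : ℝ :=
  sSup { x : ℝ | ∃ Pov : Fin n → Matrix (Fin m) (Fin m) ℂ,
    (∀ i, (Pov i).PosSemidef) ∧ (∑ i, Pov i) = 1 ∧
    x = ∑ i, q i * (ip (d i) ((Pov i) *ᵥ (d i))).re }

/-- The visibility `V(ρ̃_A) = √( (2(n−1)/n²) ∑_{i≠k} |⟨d_k, d_i⟩|² |(ρ_A)_{ik}|² )`. -/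
def Vis {m n : ℕ} (d : Fin n → Fin m → ℂ) (ρ : Matrix (Fin n) (Fin n) ℂ) : ℝ :=
  Real.sqrt ((2 * ((n : ℝ) - 1) / (n : ℝ) ^ 2) *
    ∑ i, ∑ k, if i = k then 0 else ‖ip (d k) (d i)‖ ^ 2 * ‖ρ i k‖ ^ 2)

/-- The post-interaction detector state `ρ̃_D = ∑ i, q i • d i (d i)^*`. -/
def detState {m n : ℕ} (d : Fin n → Fin m → ℂ) (q : Fin n → ℝ) :
    Matrix (Fin m) (Fin m) ℂ :=
  ∑ i, (q i : ℂ) • vecMulVec (d i) (star (d i))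

/-- The post-interaction particle state `(ρ̃_A)_{ik} = ⟨d_k, d_i⟩ (ρ_A)_{ik}`. -/
def post {m n : ℕ} (d : Fin n → Fin m → ℂ) (ρ : Matrix (Fin n) (Fin n) ℂ) :
    Matrix (Fin n) (Fin n) ℂ :=
  Matrix.of fun i k => ip (d k) (d i) * ρ i k

/-- The purity `Tr(ρ²)` (as a real number). -/
def purity {k : Type*} [Fintype k] (ρ : Matrix k k ℂ) : ℝ := ((ρ * ρ).trace).re

/-! For two pure states the optimal success probability is Helstrom's value
`(1 + √(1 - 4 q₀ q₁ γ²)) / 2` with `γ = |⟨d₀, d₁⟩|`. Any two-outcome POVM is `(P, 1 - P)`; the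
Cauchy–Schwarz inequality for the semi-inner products of `P` and `1 - P` gives
`γ ≤ √(a b) + √((1 - a) (1 - b))` with `a = ⟨d₀, P d₀⟩`, `b = ⟨d₁, P d₁⟩`, which a Lagrange-type
identity turns into the upper bound. The bound is attained by the projection onto an eigenvector
of `q₀ d₀ d₀* - q₁ d₁ d₁*` for its eigenvalue `P_s - q₁ ≥ 0`. For `n = 2` the squared visibility
is `q₀ q₁ γ²`, and `(1 - 4 q₀ q₁ γ²) / 4 + q₀ q₁ γ² = 1 / 4`. -/

open scoped MatrixOrder

section InnerProduct

variable {k : Type*} [Fintype k]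

lemma ip_eq_star_dotProduct (a b : k → ℂ) : ip a b = star a ⬝ᵥ b := rfl

lemma conj_ip (a b : k → ℂ) : starRingEnd ℂ (ip a b) = ip b a := by
  rw [ip_eq_star_dotProduct, ip_eq_star_dotProduct, star_dotProduct, starRingEnd_apply, star_star]

lemma norm_ip_comm (a b : k → ℂ) : ‖ip b a‖ = ‖ip a b‖ := by
  rw [← conj_ip, Complex.norm_conj]

lemma ip_self_eq_ofReal_re (a : k → ℂ) : ip a a = ((ip a a).re : ℂ) :=
  (Complex.conj_eq_iff_re.mp (conj_ip a a)).symm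

lemma ip_self_eq_sum_norm_sq (a : k → ℂ) : ip a a = ((∑ i, ‖a i‖ ^ 2 : ℝ) : ℂ) := by
  push_cast
  exact Finset.sum_congr rfl fun i _ => Complex.conj_mul' (a i)

@[simp] lemma ip_add_right (x u v : k → ℂ) : ip x (u + v) = ip x u + ip x v :=
  dotProduct_add _ _ _

@[simp] lemma ip_sub_right (x u v : k → ℂ) : ip x (u - v) = ip x u - ip x v :=
  dotProduct_sub _ _ _

@[simp] lemma ip_smul_right (x v : k → ℂ) (s : ℂ) : ip x (s • v) = s * ip x v :=
  dotProduct_smul _ _ _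

@[simp] lemma ip_sub_left (x u v : k → ℂ) : ip (u - v) x = ip u x - ip v x := by
  simp only [ip_eq_star_dotProduct, star_sub, sub_dotProduct]

@[simp] lemma ip_smul_left (x v : k → ℂ) (s : ℂ) : ip (s • v) x = starRingEnd ℂ s * ip v x := by
  simp only [ip_eq_star_dotProduct, star_smul, smul_dotProduct, smul_eq_mul, starRingEnd_apply]

lemma ip_vecMulVec_star_mulVec (x v y : k → ℂ) :
    ip x (vecMulVec v (star v) *ᵥ y) = ip x v * ip v y := by
  rw [vecMulVec_mulVec, ← ip_eq_star_dotProduct, op_smul_eq_smul, ip_smul_right, mul_comm]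

lemma Matrix.PosSemidef.re_ip_mulVec_nonneg {M : Matrix k k ℂ} (hM : M.PosSemidef)
    (x : k → ℂ) : 0 ≤ (ip x (M *ᵥ x)).re :=
  hM.re_dotProduct_nonneg x

lemma Matrix.PosSemidef.norm_ip_mulVec_le {M : Matrix k k ℂ} (hM : M.PosSemidef) (x y : k → ℂ) :
    ‖ip x (M *ᵥ y)‖ ≤ √(ip x (M *ᵥ x)).re * √(ip y (M *ᵥ y)).re := by
  let _ := M.toSeminormedAddCommGroup hM
  let _ := M.toInnerProductSpace hM
  have e (u v : k → ℂ) : inner ℂ u v = ip u (M *ᵥ v) := dotProduct_comm _ _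
  simpa only [e, norm_eq_sqrt_re_inner (𝕜 := ℂ), RCLike.re_to_complex] using
    norm_inner_le_norm (𝕜 := ℂ) x y

lemma norm_ip_le_one [DecidableEq k] {a b : k → ℂ} (ha : ip a a = 1) (hb : ip b b = 1) :
    ‖ip a b‖ ≤ 1 := by
  simpa [ha, hb] using PosSemidef.one.norm_ip_mulVec_le a b

lemma norm_ip_le_of_posSemidef_of_posSemidef_one_sub [DecidableEq k] {P : Matrix k k ℂ}
    (hP : P.PosSemidef) (hP' : (1 - P).PosSemidef) (d₀ d₁ : k → ℂ) :
    ‖ip d₀ d₁‖ ≤ √(ip d₀ (P *ᵥ d₀)).re * √(ip d₁ (P *ᵥ d₁)).re +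
      √(ip d₀ ((1 - P) *ᵥ d₀)).re * √(ip d₁ ((1 - P) *ᵥ d₁)).re := by
  have hsplit : ip d₀ d₁ = ip d₀ (P *ᵥ d₁) + ip d₀ ((1 - P) *ᵥ d₁) := by
    rw [← ip_add_right, ← add_mulVec, add_sub_cancel, one_mulVec]
  calc ‖ip d₀ d₁‖ ≤ ‖ip d₀ (P *ᵥ d₁)‖ + ‖ip d₀ ((1 - P) *ᵥ d₁)‖ := hsplit ▸ norm_add_le _ _
    _ ≤ _ := add_le_add (hP.norm_ip_mulVec_le d₀ d₁) (hP'.norm_ip_mulVec_le d₀ d₁)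

/-- For `v = 0` this is the zero matrix, since `0⁻¹ = 0`. -/
def rankOneProj (v : k → ℂ) : Matrix k k ℂ := (ip v v)⁻¹ • vecMulVec v (star v)

lemma isStarProjection_rankOneProj (v : k → ℂ) : IsStarProjection (rankOneProj v) := by
  refine ⟨?_, ?_⟩
  · rw [IsIdempotentElem, rankOneProj, smul_mul_smul, vecMulVec_mul_vecMulVec,
      ← ip_eq_star_dotProduct, vecMulVec_smul, smul_smul]
    field_simp
  · rw [IsSelfAdjoint, rankOneProj, star_smul, star_inv₀, ← starRingEnd_apply, conj_ip,
      star_eq_conjTranspose, (posSemidef_vecMulVec_self_star v).isHermitian.eq]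

lemma ip_rankOneProj_mulVec_self (v x : k → ℂ) :
    ip x (rankOneProj v *ᵥ x) = ((‖ip x v‖ ^ 2 / (ip v v).re : ℝ) : ℂ) := by
  rw [rankOneProj, smul_mulVec, ip_smul_right, ip_vecMulVec_star_mulVec, ← conj_ip x v,
    Complex.mul_conj', ip_self_eq_ofReal_re v, Complex.ofReal_re]
  push_cast
  ring

end InnerProduct

def helstrom (q₀ q₁ γ : ℝ) : ℝ := (1 + √(1 - 4 * q₀ * q₁ * γ ^ 2)) / 2

section HelstromValue

variable {q₀ q₁ γ : ℝ}

lemma le_helstrom_of_le_sqrt {a b : ℝ} (hq₀ : 0 ≤ q₀) (hq₁ : 0 ≤ q₁) (hq : q₀ + q₁ = 1)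
    (ha₀ : 0 ≤ a) (ha₁ : a ≤ 1) (hb₀ : 0 ≤ b) (hb₁ : b ≤ 1) (hγ₀ : 0 ≤ γ)
    (hγ : γ ≤ √a * √b + √(1 - a) * √(1 - b)) :
    q₀ * a + q₁ * (1 - b) ≤ helstrom q₀ q₁ γ := by
  obtain ⟨x, hx₀, rfl⟩ : ∃ x, 0 ≤ x ∧ x ^ 2 = a := ⟨√a, by positivity, Real.sq_sqrt ha₀⟩
  obtain ⟨y, hy₀, rfl⟩ : ∃ y, 0 ≤ y ∧ y ^ 2 = b := ⟨√b, by positivity, Real.sq_sqrt hb₀⟩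
  obtain ⟨z, hz₀, hz⟩ : ∃ z, 0 ≤ z ∧ z ^ 2 = 1 - x ^ 2 :=
    ⟨√(1 - x ^ 2), by positivity, Real.sq_sqrt (by linarith)⟩
  obtain ⟨w, hw₀, hw⟩ : ∃ w, 0 ≤ w ∧ w ^ 2 = 1 - y ^ 2 :=
    ⟨√(1 - y ^ 2), by positivity, Real.sq_sqrt (by linarith)⟩
  rw [← hz, ← hw, Real.sqrt_sq hx₀, Real.sqrt_sq hy₀, Real.sqrt_sq hz₀, Real.sqrt_sq hw₀] at hγ
  have hlagrange : (q₀ * (x ^ 2 - z ^ 2) + q₁ * (w ^ 2 - y ^ 2)) ^ 2 +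
      4 * q₀ * q₁ * (x * y + z * w) ^ 2 + 4 * (q₀ * x * z - q₁ * y * w) ^ 2 =
      (q₀ * (x ^ 2 + z ^ 2) + q₁ * (y ^ 2 + w ^ 2)) ^ 2 := by
    ring
  rw [show x ^ 2 + z ^ 2 = 1 by linarith, show y ^ 2 + w ^ 2 = 1 by linarith,
    mul_one, mul_one, hq, one_pow] at hlagrange
  have hγsq : 4 * q₀ * q₁ * γ ^ 2 ≤ 4 * q₀ * q₁ * (x * y + z * w) ^ 2 := by gcongr
  have hsq : (2 * (q₀ * x ^ 2 + q₁ * (1 - y ^ 2)) - 1) ^ 2 ≤ 1 - 4 * q₀ * q₁ * γ ^ 2 := by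
    rw [show 2 * (q₀ * x ^ 2 + q₁ * (1 - y ^ 2)) - 1 = q₀ * (x ^ 2 - z ^ 2) + q₁ * (w ^ 2 - y ^ 2)
      by linear_combination q₀ * hz - q₁ * hw + hq]
    nlinarith [sq_nonneg (q₀ * x * z - q₁ * y * w)]
  unfold helstrom
  linarith [Real.le_sqrt_of_sq_le hsq]

lemma one_sub_four_mul_mul_sq_nonneg (hq₀ : 0 ≤ q₀) (hq₁ : 0 ≤ q₁) (hq : q₀ + q₁ = 1)
    (hγ₀ : 0 ≤ γ) (hγ : γ ≤ 1) : 0 ≤ 1 - 4 * q₀ * q₁ * γ ^ 2 := by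
  have : γ ^ 2 ≤ 1 := pow_le_one₀ hγ₀ hγ
  nlinarith [sq_nonneg (q₀ - q₁), mul_nonneg hq₀ hq₁]

lemma helstrom_sub_half_sq (h : 0 ≤ 1 - 4 * q₀ * q₁ * γ ^ 2) :
    (helstrom q₀ q₁ γ - 1 / 2) ^ 2 = (1 - 4 * q₀ * q₁ * γ ^ 2) / 4 := by
  rw [helstrom, show ∀ x : ℝ, (1 + x) / 2 - 1 / 2 = x / 2 by intro; ring, div_pow,
    Real.sq_sqrt h]
  norm_num

lemma helstrom_sub_nonneg (hq₀ : 0 ≤ q₀) (hq₁ : 0 ≤ q₁) (hq : q₀ + q₁ = 1) (hγ₀ : 0 ≤ γ)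
    (hγ : γ ≤ 1) : 0 ≤ helstrom q₀ q₁ γ - q₁ := by
  have hsq : (q₁ - q₀) ^ 2 ≤ 1 - 4 * q₀ * q₁ * γ ^ 2 := by
    nlinarith [mul_nonneg (mul_nonneg hq₀ hq₁) (by nlinarith : 0 ≤ 1 - γ ^ 2)]
  unfold helstrom
  linarith [Real.le_sqrt_of_sq_le hsq]

lemma helstrom_sub_sq (hq : q₀ + q₁ = 1) (h : 0 ≤ 1 - 4 * q₀ * q₁ * γ ^ 2) :
    (helstrom q₀ q₁ γ - q₁) ^ 2 =
      (q₀ - q₁) * (helstrom q₀ q₁ γ - q₁) + q₀ * q₁ * (1 - γ ^ 2) := by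
  have hs := Real.sq_sqrt h
  unfold helstrom
  linear_combination hs / 4 - (1 + √(1 - 4 * q₀ * q₁ * γ ^ 2)) / 2 * hq

end HelstromValue

section Measurement

variable {k : Type*} [Fintype k] [DecidableEq k] {d₀ d₁ : k → ℂ}

lemma re_ip_one_sub_mulVec {d : k → ℂ} (hd : ip d d = 1) (P : Matrix k k ℂ) :
    (ip d ((1 - P) *ᵥ d)).re = 1 - (ip d (P *ᵥ d)).re := by
  rw [sub_mulVec, one_mulVec, ip_sub_right, hd, Complex.sub_re, Complex.one_re]

lemma success_le_helstrom {P : Matrix k k ℂ} (hP : P.PosSemidef) (hP' : (1 - P).PosSemidef)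
    (h₀ : ip d₀ d₀ = 1) (h₁ : ip d₁ d₁ = 1)
    {q₀ q₁ : ℝ} (hq₀ : 0 ≤ q₀) (hq₁ : 0 ≤ q₁) (hq : q₀ + q₁ = 1) :
    q₀ * (ip d₀ (P *ᵥ d₀)).re + q₁ * (ip d₁ ((1 - P) *ᵥ d₁)).re ≤
      helstrom q₀ q₁ ‖ip d₀ d₁‖ := by
  have hγ := norm_ip_le_of_posSemidef_of_posSemidef_one_sub hP hP' d₀ d₁
  have ha := hP'.re_ip_mulVec_nonneg d₀
  have hb := hP'.re_ip_mulVec_nonneg d₁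
  rw [re_ip_one_sub_mulVec h₀] at hγ ha
  rw [re_ip_one_sub_mulVec h₁] at hγ hb ⊢
  exact le_helstrom_of_le_sqrt hq₀ hq₁ hq (hP.re_ip_mulVec_nonneg d₀) (by linarith)
    (hP.re_ip_mulVec_nonneg d₁) (by linarith) (norm_nonneg _) hγ

lemma success_rankOneProj (h₁ : ip d₁ d₁ = 1) (q₀ q₁ : ℝ) (v : k → ℂ) :
    q₀ * (ip d₀ (rankOneProj v *ᵥ d₀)).re + q₁ * (ip d₁ ((1 - rankOneProj v) *ᵥ d₁)).re =
      q₁ + (q₀ * ‖ip d₀ v‖ ^ 2 - q₁ * ‖ip d₁ v‖ ^ 2) / (ip v v).re := by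
  rw [re_ip_one_sub_mulVec h₁, ip_rankOneProj_mulVec_self, ip_rankOneProj_mulVec_self,
    Complex.ofReal_re, Complex.ofReal_re]
  ring

lemma exists_isStarProjection_success_eq (h₀ : ip d₀ d₀ = 1) (h₁ : ip d₁ d₁ = 1)
    {q₀ q₁ μ : ℝ} (hq₁ : 0 ≤ q₁) (hμ : 0 ≤ μ)
    (hroot : μ ^ 2 = (q₀ - q₁) * μ + q₀ * q₁ * (1 - ‖ip d₀ d₁‖ ^ 2)) :
    ∃ P : Matrix k k ℂ, IsStarProjection P ∧
      q₀ * (ip d₀ (P *ᵥ d₀)).re + q₁ * (ip d₁ ((1 - P) *ᵥ d₁)).re = q₁ + μ := by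
  set c := ip d₀ d₁ with hc
  set γ := ‖c‖
  have hγ : 0 ≤ 1 - γ ^ 2 := by nlinarith [norm_nonneg c, norm_ip_le_one h₀ h₁]
  have hcc : starRingEnd ℂ c * c = (γ : ℂ) ^ 2 := Complex.conj_mul' c
  set α := μ + q₁ * (1 - γ ^ 2) with hα
  set t := (μ + q₁) * α - q₁ * μ * γ ^ 2 with ht
  -- `v` is an eigenvector of `q₀ d₀ d₀* - q₁ d₁ d₁*` for the eigenvalue `μ`.
  set v := ((μ + q₁ : ℝ) : ℂ) • d₀ - ((q₁ : ℂ) * starRingEnd ℂ c) • d₁ with hv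
  have h0v : ip d₀ v = α := by
    simp only [hv, ip_sub_right, ip_smul_right, h₀, ← hc, mul_assoc, hcc, hα]
    push_cast; ring
  have h1v : ip d₁ v = μ * starRingEnd ℂ c := by
    simp only [hv, ip_sub_right, ip_smul_right, h₁, ← conj_ip d₀ d₁, ← hc]
    push_cast; ring
  have hvv : ip v v = t := by
    rw [hv, ip_sub_left, ip_smul_left, ip_smul_left, ← hv, h0v, h1v]
    simp only [map_mul, Complex.conj_ofReal, Complex.conj_conj, ht]
    push_cast
    linear_combination (-(q₁ : ℂ) * μ) * hcc
  have hμt : μ ^ 2 ≤ t := by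
    rw [ht, hα]
    nlinarith [mul_nonneg (mul_nonneg hq₁ hγ) (by positivity : 0 ≤ 2 * μ + q₁)]
  have hrayleigh : q₀ * α ^ 2 - q₁ * (μ * γ) ^ 2 = μ * t := by
    rw [ht, hα]
    linear_combination (-α) * hroot
  refine ⟨rankOneProj v, isStarProjection_rankOneProj v, ?_⟩
  rw [success_rankOneProj h₁, h0v, h1v, hvv, Complex.ofReal_re, norm_mul, Complex.norm_conj,
    Complex.norm_real, Complex.norm_real, Real.norm_eq_abs, Real.norm_eq_abs, sq_abs,
    abs_of_nonneg hμ, hrayleigh]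
  rcases eq_or_ne t 0 with h | h
  · obtain rfl : μ = 0 := by nlinarith
    simp
  · rw [mul_div_cancel_right₀ _ h]

end Measurement

lemma Ps_two_eq_helstrom {m : ℕ} {d : Fin 2 → Fin m → ℂ} (hd : ∀ i, ip (d i) (d i) = 1)
    {q : Fin 2 → ℝ} (hq : ∀ i, 0 ≤ q i) (hqs : q 0 + q 1 = 1) :
    Ps d q = helstrom (q 0) (q 1) ‖ip (d 0) (d 1)‖ := by
  refine IsGreatest.csSup_eq ⟨?_, ?_⟩
  · have hγ := norm_ip_le_one (hd 0) (hd 1)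
    obtain ⟨P, hP, hval⟩ := exists_isStarProjection_success_eq (hd 0) (hd 1) (hq 1)
      (helstrom_sub_nonneg (hq 0) (hq 1) hqs (norm_nonneg _) hγ)
      (helstrom_sub_sq hqs (one_sub_four_mul_mul_sq_nonneg (hq 0) (hq 1) hqs (norm_nonneg _) hγ))
    refine ⟨![P, 1 - P], ?_, by simp, ?_⟩
    · exact Fin.forall_fin_two.mpr
        ⟨by simpa using hP.nonneg.posSemidef, by simpa using hP.one_sub.nonneg.posSemidef⟩
    · simp [Fin.sum_univ_two, hval]
  · rintro x ⟨E, hE, hsum, rfl⟩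
    have hE₁ : E 1 = 1 - E 0 := eq_sub_of_add_eq' (by simpa [Fin.sum_univ_two] using hsum)
    rw [Fin.sum_univ_two, hE₁]
    exact success_le_helstrom (hE 0) (hE₁ ▸ hE 1) (hd 0) (hd 1) (hq 0) (hq 1) hqs

lemma Vis_two_sq {m : ℕ} (d : Fin 2 → Fin m → ℂ) (ρ : Matrix (Fin 2) (Fin 2) ℂ) :
    Vis d ρ ^ 2 = ‖ip (d 0) (d 1)‖ ^ 2 * (‖ρ 0 1‖ ^ 2 + ‖ρ 1 0‖ ^ 2) / 2 := by
  rw [Vis, Real.sq_sqrt (by positivity)]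
  simp only [Nat.cast_ofNat, Fin.sum_univ_two, Fin.isValue, ↓reduceIte, zero_ne_one, one_ne_zero,
    zero_add, add_zero, norm_ip_comm (d 0) (d 1)]
  ring

/-- the complete wave-particle duality for a pure input state of the
particle (without quantum memory) in the two-path interferometer with detectors. -/
theorem stmt12 (m : ℕ) (d : Fin 2 → Fin m → ℂ)
    (hd : ∀ i, ip (d i) (d i) = 1)
    (ψ : Fin 2 → ℂ) (hψ : ip ψ ψ = 1)
    (ρA : Matrix (Fin 2) (Fin 2) ℂ) (hρA : ρA = vecMulVec ψ (star ψ))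
    (q : Fin 2 → ℝ) (hq : ∀ i, q i = ‖ψ i‖ ^ 2) :
    (Ps d q - 1 / 2) ^ 2 + (Vis d ρA) ^ 2 = 1 / 4 := by
  have hq₀ : ∀ i, 0 ≤ q i := fun i => hq i ▸ sq_nonneg _
  have hqs : q 0 + q 1 = 1 := by
    have := congrArg Complex.re hψ
    rwa [ip_self_eq_sum_norm_sq, Complex.ofReal_re, Fin.sum_univ_two, ← hq, ← hq] at this
  have hγ := norm_ip_le_one (hd 0) (hd 1)
  rw [Ps_two_eq_helstrom hd hq₀ hqs,
    helstrom_sub_half_sq (one_sub_four_mul_mul_sq_nonneg (hq₀ 0) (hq₀ 1) hqs (norm_nonneg _) hγ),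
    Vis_two_sq, hρA]
  simp only [vecMulVec_apply, Pi.star_apply, norm_mul, norm_star, hq]
  ring
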